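/- arXiv:1304.0292 — 8 statements merged into one kernel-verified Lean document; each statement's English description precedes it below -/
import Mathlib

section
/- Let Ω be an open convex subset of a finite-dimensional real inner product space, λ ∈ ℝ, and let fₙ : Ω → ℝ be a sequence of λ-concave functions converging pointwise on Ω to a function f : Ω → ℝ. Let xₙ ∈ Ω converge to x ∈ Ω, suppose each fₙ is Fréchet differentiable at xₙ and f is Fréchet differentiable at x. Then ‖∇f(x)‖ ≤ liminf_{n→∞} ‖∇fₙ(xₙ)‖. -/
/-!
After subtracting `λ/2 ‖·‖²` the functions become concave. A pointwise limit of concave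
functions is concave, hence continuous, and the convergence is locally uniform: a lower bound
passes from the vertices of a small simplex around `x` to its interior, and an upper bound at a
point follows from the lower bound at its reflection through `x`. The support inequality of
`fₙ` at `xₙ` in a fixed direction `v` then bounds `⟪∇fₙ(xₙ), v⟫` below by a difference quotient
converging to one of `f` at `x`; with `-v` this gives `⟪∇fₙ(xₙ), v⟫ → ⟪∇f(x), v⟫`. In finite
dimension the gradients therefore converge, and so do their norms.
-/

open Filter Topology
open scoped RealInnerProductSpace

section Concave

variable {E : Type*} [NormedAddCommGroup E] [NormedSpace ℝ E]

theorem ConcaveOn.le_add_of_hasFDerivAt {Ω : Set E} {h : E → ℝ} (hh : ConcaveOn ℝ Ω h)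
    {h' : E →L[ℝ] ℝ} {x y : E} (hx : x ∈ Ω) (hy : y ∈ Ω) (hd : HasFDerivAt h h' x) :
    h y ≤ h x + h' (y - x) := by
  let φ : ℝ →ᵃ[ℝ] E := AffineMap.lineMap x y
  have hφ0 : φ 0 = x := AffineMap.lineMap_apply_zero x y
  have hφ1 : φ 1 = y := AffineMap.lineMap_apply_one x y
  have hderiv : HasDerivAt (h ∘ φ) (h' (y - x)) 0 :=
    (hφ0 ▸ hd).comp_hasDerivAt (0 : ℝ) AffineMap.hasDerivAt_lineMap
  have hslope := (hh.comp_affineMap φ).slope_le_of_hasDerivAt (by simpa [hφ0] using hx)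
    (by simpa [hφ1] using hy) one_pos hderiv
  simp only [slope_def_field, Function.comp_apply, hφ0, hφ1, sub_zero, div_one] at hslope
  linarith

theorem ConcaveOn.of_tendsto {ι : Type*} {l : Filter ι} [l.NeBot] {Ω : Set E} {h : ι → E → ℝ}
    {H : E → ℝ} (hh : ∀ n, ConcaveOn ℝ Ω (h n)) (hH : ∀ y ∈ Ω, Tendsto (h · y) l (𝓝 (H y))) :
    ConcaveOn ℝ Ω H :=
  have hΩ : Convex ℝ Ω := (hh (nonempty_of_neBot l).some).1
  ⟨hΩ, fun a ha b hb p q hp hq hpq =>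
    le_of_tendsto_of_tendsto (((hH a ha).const_smul p).add ((hH b hb).const_smul q))
      (hH _ (hΩ ha hb hp hq hpq)) (Eventually.of_forall fun n => (hh n).2 ha hb hp hq hpq)⟩

variable [FiniteDimensional ℝ E] {ι : Type*} {l : Filter ι} {Ω : Set E} {h : ι → E → ℝ}
  {H : E → ℝ} {z : E} {zs : ι → E}

theorem eventually_lt_of_concaveOn (hΩ : IsOpen Ω) (hh : ∀ n, ConcaveOn ℝ Ω (h n))
    (hH : ∀ y ∈ Ω, Tendsto (h · y) l (𝓝 (H y))) (hz : z ∈ Ω) {c : ℝ}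
    (hc : ∀ᶠ y in 𝓝 z, c < H y) (hzs : Tendsto zs l (𝓝 z)) :
    ∀ᶠ n in l, c < h n (zs n) := by
  obtain ⟨b, hzb, hhull⟩ :=
    exists_mem_interior_convexHull_affineBasis (inter_mem hc (hΩ.mem_nhds hz))
  have hbU : ∀ i, c < H (b i) ∧ b i ∈ Ω := fun i => hhull (subset_convexHull ℝ _ ⟨i, rfl⟩)
  have hvertices : ∀ᶠ n in l, ∀ i, c < h n (b i) :=
    eventually_all.2 fun i => (hH _ (hbU i).2).eventually (eventually_gt_nhds (hbU i).1)
  filter_upwards [hvertices, hzs.eventually_mem (isOpen_interior.mem_nhds hzb)] with n hn hzn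
  obtain ⟨_, ⟨i, rfl⟩, hi⟩ := (hh n).exists_le_of_mem_convexHull
    (Set.range_subset_iff.2 fun i => (hbU i).2) (interior_subset hzn)
  exact (hn i).trans_le hi

theorem tendsto_apply_of_concaveOn [l.NeBot] (hΩ : IsOpen Ω) (hh : ∀ n, ConcaveOn ℝ Ω (h n))
    (hH : ∀ y ∈ Ω, Tendsto (h · y) l (𝓝 (H y))) (hz : z ∈ Ω) (hzs : Tendsto zs l (𝓝 z)) :
    Tendsto (fun n => h n (zs n)) l (𝓝 (H z)) := by
  have hHz : ContinuousAt H z :=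
    ((ConcaveOn.of_tendsto hh hH).continuousOn hΩ).continuousAt (hΩ.mem_nhds hz)
  refine tendsto_order.2 ⟨fun a ha => eventually_lt_of_concaveOn hΩ hh hH hz
    (hHz.eventually (eventually_gt_nhds ha)) hzs, fun a ha => ?_⟩
  obtain ⟨ε, hε, rfl⟩ : ∃ ε > 0, a = H z + 3 * ε := ⟨(a - H z) / 3, by linarith, by ring⟩
  have hws : Tendsto (fun n => (2 : ℝ) • z - zs n) l (𝓝 z) := by
    simpa [two_smul] using (tendsto_const_nhds (x := (2 : ℝ) • z)).sub hzs
  have hlow := eventually_lt_of_concaveOn hΩ hh hH hz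
    (hHz.eventually (eventually_gt_nhds (show H z - ε < H z by linarith))) hws
  have hcenter := (hH z hz).eventually (eventually_lt_nhds (show H z < H z + ε by linarith))
  filter_upwards [hlow, hcenter, hzs.eventually_mem (hΩ.mem_nhds hz),
    hws.eventually_mem (hΩ.mem_nhds hz)] with n hlow hcenter hzn hwn
  have hmid := (hh n).2 hzn hwn (by norm_num : (0 : ℝ) ≤ 1 / 2) (by norm_num : (0 : ℝ) ≤ 1 / 2)
    (by norm_num)
  rw [show (1 / 2 : ℝ) • zs n + (1 / 2 : ℝ) • ((2 : ℝ) • z - zs n) = z by module,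
    smul_eq_mul, smul_eq_mul] at hmid
  linarith

theorem eventually_lt_fderiv_apply_of_concaveOn [l.NeBot] (hΩ : IsOpen Ω)
    (hh : ∀ n, ConcaveOn ℝ Ω (h n)) (hH : ∀ y ∈ Ω, Tendsto (h · y) l (𝓝 (H y))) (hz : z ∈ Ω)
    (hzs : Tendsto zs l (𝓝 z)) {h' : ι → E →L[ℝ] ℝ} (hh' : ∀ n, HasFDerivAt (h n) (h' n) (zs n))
    {H' : E →L[ℝ] ℝ} (hH' : HasFDerivAt H H' z) (v : E) {c : ℝ} (hc : c < H' v) :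
    ∀ᶠ n in l, c < h' n v := by
  have hline : Tendsto (fun t : ℝ => z + t • v) (𝓝[>] 0) (𝓝 z) :=
    ((by fun_prop : Continuous fun t : ℝ => z + t • v).tendsto' 0 z (by simp)).mono_left
      nhdsWithin_le_nhds
  have hderiv : HasDerivAt (fun t : ℝ => H (z + t • v)) (H' v) 0 := by
    have hH'0 : HasFDerivAt H H' (z + (0 : ℝ) • v) := by simpa using hH'
    have := hH'0.comp_hasDerivAt (0 : ℝ) (((hasDerivAt_id (0 : ℝ)).smul_const v).const_add z)
    simpa [Function.comp_def] using this
  have hslope : Tendsto (slope (fun t : ℝ => H (z + t • v)) 0) (𝓝[>] 0) (𝓝 (H' v)) :=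
    (hasDerivAt_iff_tendsto_slope.1 hderiv).mono_left (nhdsGT_le_nhdsNE 0)
  obtain ⟨t, ⟨hct, hzt⟩, ht⟩ := (((hslope.eventually (eventually_gt_nhds hc)).and
    (hline.eventually_mem (hΩ.mem_nhds hz))).and self_mem_nhdsWithin).exists
  rw [slope_def_field, sub_zero, zero_smul, add_zero, lt_div_iff₀ ht] at hct
  have hdiff : Tendsto (fun n => h n (zs n + t • v) - h n (zs n)) l
      (𝓝 (H (z + t • v) - H z)) :=
    (tendsto_apply_of_concaveOn hΩ hh hH hzt (hzs.add_const _)).sub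
      (tendsto_apply_of_concaveOn hΩ hh hH hz hzs)
  filter_upwards [hdiff.eventually (eventually_gt_nhds hct), hzs.eventually_mem (hΩ.mem_nhds hz),
    (hzs.add_const (t • v)).eventually_mem (hΩ.mem_nhds hzt)] with n hn hzn hztn
  have hsupp := (hh n).le_add_of_hasFDerivAt hzn hztn (hh' n)
  rw [add_sub_cancel_left, map_smul, smul_eq_mul] at hsupp
  nlinarith

theorem tendsto_fderiv_apply_of_concaveOn [l.NeBot] (hΩ : IsOpen Ω)
    (hh : ∀ n, ConcaveOn ℝ Ω (h n)) (hH : ∀ y ∈ Ω, Tendsto (h · y) l (𝓝 (H y))) (hz : z ∈ Ω)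
    (hzs : Tendsto zs l (𝓝 z)) {h' : ι → E →L[ℝ] ℝ} (hh' : ∀ n, HasFDerivAt (h n) (h' n) (zs n))
    {H' : E →L[ℝ] ℝ} (hH' : HasFDerivAt H H' z) (v : E) :
    Tendsto (fun n => h' n v) l (𝓝 (H' v)) := by
  refine tendsto_order.2 ⟨fun c hc => eventually_lt_fderiv_apply_of_concaveOn hΩ hh hH hz hzs hh'
    hH' v hc, fun c hc => ?_⟩
  filter_upwards [eventually_lt_fderiv_apply_of_concaveOn hΩ hh hH hz hzs hh' hH' (-v)
    (c := -c) (by simpa using hc)] with n hn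
  simpa using hn

end Concave

section InnerProduct

variable {E : Type*} [NormedAddCommGroup E] [InnerProductSpace ℝ E]

theorem tendsto_of_tendsto_inner [FiniteDimensional ℝ E] {ι : Type*} {l : Filter ι} {u : ι → E}
    {a : E} (hu : ∀ v, Tendsto (fun n => ⟪u n, v⟫) l (𝓝 ⟪a, v⟫)) : Tendsto u l (𝓝 a) := by
  let b := stdOrthonormalBasis ℝ E
  rw [← b.sum_repr' a,
    show u = fun n => ∑ i, ⟪b i, u n⟫ • b i from funext fun n => (b.sum_repr' _).symm]
  refine tendsto_finsetSum _ fun i _ => Tendsto.smul_const ?_ (b i)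
  simpa only [real_inner_comm (b i)] using hu (b i)

theorem HasFDerivAt.sub_half_mul_norm_sq {f : E → ℝ} {g x : E} (hf : HasFDerivAt f (innerSL ℝ g) x)
    (c : ℝ) : HasFDerivAt (fun y => f y - c / 2 * ‖y‖ ^ 2) (innerSL ℝ (g - c • x)) x := by
  refine (hf.sub ((hasStrictFDerivAt_norm_sq x).hasFDerivAt.const_mul (c / 2))).congr_fderiv ?_
  ext v
  simp only [sub_apply, smul_apply, innerSL_apply_apply,
    inner_sub_left, real_inner_smul_left, nsmul_eq_mul, smul_eq_mul]
  ring

end InnerProduct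

theorem norm_gradient_le_liminf_general
    {E : Type*} [NormedAddCommGroup E] [InnerProductSpace ℝ E] [FiniteDimensional ℝ E]
    (Ω : Set E) (hΩo : IsOpen Ω) (lam : ℝ)
    (f : ℕ → E → ℝ) (flim : E → ℝ)
    (hconc : ∀ n, ConcaveOn ℝ Ω (fun y => f n y - lam / 2 * ‖y‖ ^ 2))
    (hptws : ∀ y ∈ Ω, Filter.Tendsto (fun n => f n y) Filter.atTop (nhds (flim y)))
    (x : ℕ → E) (x₀ : E) (hx₀ : x₀ ∈ Ω)
    (hxlim : Filter.Tendsto x Filter.atTop (nhds x₀))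
    (g : ℕ → E) (hg : ∀ n, HasFDerivAt (f n) (innerSL ℝ (g n)) (x n))
    (g₀ : E) (hg₀ : HasFDerivAt flim (innerSL ℝ g₀) x₀) :
    ‖g₀‖ ≤ Filter.liminf (fun n => ‖g n‖) Filter.atTop := by
  have hshifted : Tendsto (fun n => g n - lam • x n) atTop (𝓝 (g₀ - lam • x₀)) :=
    tendsto_of_tendsto_inner fun v => tendsto_fderiv_apply_of_concaveOn hΩo hconc
      (fun y hy => (hptws y hy).sub_const _) hx₀ hxlim (fun n => (hg n).sub_half_mul_norm_sq lam)
      (hg₀.sub_half_mul_norm_sq lam) v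
  have hgrad : Tendsto g atTop (𝓝 g₀) := by
    simpa using hshifted.add (hxlim.const_smul lam)
  exact hgrad.norm.liminf_eq.ge

/-- Lower semicontinuity of gradient norms under pointwise convergence of λ-concave
functions (linear model of Lemma 1.7). -/
theorem norm_gradient_le_liminf
    {E : Type*} [NormedAddCommGroup E] [InnerProductSpace ℝ E] [FiniteDimensional ℝ E]
    (Ω : Set E) (hΩo : IsOpen Ω) (hΩc : Convex ℝ Ω) (lam : ℝ)
    (f : ℕ → E → ℝ) (flim : E → ℝ)
    (hconc : ∀ n, ConcaveOn ℝ Ω (fun y => f n y - lam / 2 * ‖y‖ ^ 2))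
    (hptws : ∀ y ∈ Ω, Filter.Tendsto (fun n => f n y) Filter.atTop (nhds (flim y)))
    (x : ℕ → E) (hx : ∀ n, x n ∈ Ω) (x₀ : E) (hx₀ : x₀ ∈ Ω)
    (hxlim : Filter.Tendsto x Filter.atTop (nhds x₀))
    (g : ℕ → E) (hg : ∀ n, HasFDerivAt (f n) (innerSL ℝ (g n)) (x n))
    (g₀ : E) (hg₀ : HasFDerivAt flim (innerSL ℝ g₀) x₀) :
    ‖g₀‖ ≤ Filter.liminf (fun n => ‖g n‖) Filter.atTop :=
  norm_gradient_le_liminf_general Ω hΩo lam f flim hconc hptws x x₀ hx₀ hxlim g hg g₀ hg₀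
end

section
/- Let E be a real inner product space, λ ∈ ℝ, and f : E → ℝ a λ-concave continuously differentiable function. Let α : [0, T) → E be an f-gradient curve with ∇f(α(t)) ≠ 0 for all t ∈ [0, T), and let s(t) = ∫₀ᵗ ‖∇f(α(u))‖ du be its arclength parameter (a strictly increasing function). Then the reparametrized composition is λ-concave in arclength: for any 0 ≤ t₀ < t₁ < t₂ < T, writing sᵢ = s(tᵢ) and h(sᵢ) = f(α(tᵢ)) − (λ/2)·sᵢ², one has h(s₁) ≥ ((s₂ − s₁)·h(s₀) + (s₁ − s₀)·h(s₂))/(s₂ − s₀). -/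
/-!
Summing the first-order form of `λ`-concavity at two points gives the one-sided Lipschitz bound
`⟪∇f y - ∇f x, y - x⟫ ≤ λ ‖y - x‖²`. Along the gradient flow it makes `‖α (t + h) - α t‖` grow at
most like `exp (λ t)`, and letting `h → 0` gives `‖∇f (α b)‖ ≤ exp (λ (b - a)) ‖∇f (α a)‖`.
Comparing with exponentials, `‖∇f (α t)‖ - λ s t` is nonincreasing. As
`d/dt (f (α t) - λ/2 s(t)²) = s'(t) (‖∇f (α t)‖ - λ s t)`, this function has a nonincreasing
derivative with respect to `s`, i.e. it is concave in `s`.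
-/

open scoped RealInnerProductSpace
open Set Filter Topology

section Concave

variable {E : Type*} [NormedAddCommGroup E] [InnerProductSpace ℝ E] {S : Set E} {x y : E}

theorem ConcaveOn.le_add_inner_of_hasFDerivAt {F : E → ℝ} {G : E} (hF : ConcaveOn ℝ S F)
    (hx : x ∈ S) (hy : y ∈ S) (hG : HasFDerivAt F (innerSL ℝ G) x) :
    F y ≤ F x + ⟪G, y - x⟫ := by
  set ℓ : ℝ →ᵃ[ℝ] E := AffineMap.lineMap x y
  have hline : ConcaveOn ℝ (ℓ ⁻¹' S) (F ∘ ℓ) := hF.comp_affineMap ℓ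
  have hderiv : HasDerivAt (F ∘ ℓ) ⟪G, y - x⟫ 0 := by
    have hG0 : HasFDerivAt F (innerSL ℝ G) (ℓ 0) := by simpa [ℓ] using hG
    simpa using hG0.comp_hasDerivAt 0 AffineMap.hasDerivAt_lineMap
  have := hline.slope_le_of_hasDerivAt (x := 0) (y := 1) (by simpa [ℓ] using hx)
    (by simpa [ℓ] using hy) one_pos hderiv
  simp only [slope_def_field, Function.comp_apply, AffineMap.lineMap_apply_one,
    AffineMap.lineMap_apply_zero, sub_zero, div_one, ℓ] at this
  linarith

theorem ConcaveOn.inner_sub_sub_nonpos {F : E → ℝ} {G : E → E} (hF : ConcaveOn ℝ S F)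
    (hx : x ∈ S) (hy : y ∈ S) (hGx : HasFDerivAt F (innerSL ℝ (G x)) x)
    (hGy : HasFDerivAt F (innerSL ℝ (G y)) y) :
    ⟪G y - G x, y - x⟫ ≤ 0 := by
  have hxy := hF.le_add_inner_of_hasFDerivAt hx hy hGx
  have hyx := hF.le_add_inner_of_hasFDerivAt hy hx hGy
  rw [← neg_sub y x, inner_neg_right] at hyx
  rw [inner_sub_left]
  linarith

theorem inner_sub_sub_le_of_concaveOn_sub_sq {f : E → ℝ} {g : E → E} {lam : ℝ}
    (hf : ConcaveOn ℝ S (fun x => f x - lam / 2 * ‖x‖ ^ 2)) (hx : x ∈ S) (hy : y ∈ S)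
    (hgx : HasFDerivAt f (innerSL ℝ (g x)) x) (hgy : HasFDerivAt f (innerSL ℝ (g y)) y) :
    ⟪g y - g x, y - x⟫ ≤ lam * ‖y - x‖ ^ 2 := by
  have hderiv : ∀ z, HasFDerivAt f (innerSL ℝ (g z)) z →
      HasFDerivAt (fun x => f x - lam / 2 * ‖x‖ ^ 2) (innerSL ℝ (g z - lam • z)) z := by
    intro z hz
    refine (hz.sub (((hasFDerivAt_id z).norm_sq).const_mul (lam / 2))).congr_fderiv ?_
    ext v
    simp only [sub_apply, smul_apply, ContinuousLinearMap.comp_id, coe_innerSL_apply, id_eq,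
      nsmul_eq_mul, smul_eq_mul, inner_sub_left, real_inner_smul_left]
    ring
  have := hf.inner_sub_sub_nonpos (G := fun z => g z - lam • z) hx hy (hderiv x hgx) (hderiv y hgy)
  have hsplit : g y - lam • y - (g x - lam • x) = (g y - g x) - lam • (y - x) := by
    rw [smul_sub]; abel
  rw [hsplit, inner_sub_left, real_inner_smul_left, real_inner_self_eq_norm_sq] at this
  linarith

end Concave

section RealVariable

variable {a b lam : ℝ}

theorem monotoneOn_Icc_of_hasDerivWithinAt_nonneg {f f' : ℝ → ℝ}
    (hf : ∀ t ∈ Icc a b, HasDerivWithinAt f (f' t) (Icc a b) t) (hf' : ∀ t ∈ Ioo a b, 0 ≤ f' t) :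
    MonotoneOn f (Icc a b) := by
  refine monotoneOn_of_hasDerivWithinAt_nonneg (convex_Icc a b) (f' := f')
    (HasDerivWithinAt.continuousOn hf) ?_ ?_ <;> rw [interior_Icc]
  · exact fun t ht => (hf t (Ioo_subset_Icc_self ht)).mono Ioo_subset_Icc_self
  · exact hf'

theorem antitoneOn_Icc_of_hasDerivWithinAt_nonpos {f f' : ℝ → ℝ}
    (hf : ∀ t ∈ Icc a b, HasDerivWithinAt f (f' t) (Icc a b) t) (hf' : ∀ t ∈ Ioo a b, f' t ≤ 0) :
    AntitoneOn f (Icc a b) := by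
  refine antitoneOn_of_hasDerivWithinAt_nonpos (convex_Icc a b) (f' := f')
    (HasDerivWithinAt.continuousOn hf) ?_ ?_ <;> rw [interior_Icc]
  · exact fun t ht => (hf t (Ioo_subset_Icc_self ht)).mono Ioo_subset_Icc_self
  · exact hf'

theorem norm_le_exp_mul_norm_of_inner_le {E : Type*} [NormedAddCommGroup E]
    [InnerProductSpace ℝ E] {u u' : ℝ → E} (hab : a ≤ b)
    (hu : ∀ t ∈ Icc a b, HasDerivWithinAt u (u' t) (Icc a b) t)
    (hinner : ∀ t ∈ Ioo a b, ⟪u t, u' t⟫ ≤ lam * ‖u t‖ ^ 2) :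
    ‖u b‖ ≤ Real.exp (lam * (b - a)) * ‖u a‖ := by
  have hexp : ∀ t, HasDerivAt (fun t => Real.exp (-(2 * lam * (t - a))))
      (Real.exp (-(2 * lam * (t - a))) * -(2 * lam)) t := fun t => by
    simpa using ((((hasDerivAt_id t).sub_const a).const_mul (2 * lam)).neg).exp
  have hr : AntitoneOn (fun t => Real.exp (-(2 * lam * (t - a))) * ‖u t‖ ^ 2) (Icc a b) := by
    refine antitoneOn_Icc_of_hasDerivWithinAt_nonpos
      (fun t ht => ((hexp t).hasDerivWithinAt.mul (hu t ht).norm_sq)) fun t ht => ?_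
    nlinarith [hinner t ht, Real.exp_pos (-(2 * lam * (t - a)))]
  have hrab : Real.exp (-(2 * lam * (b - a))) * ‖u b‖ ^ 2 ≤ ‖u a‖ ^ 2 := by
    simpa using hr (left_mem_Icc.2 hab) (right_mem_Icc.2 hab) hab
  rw [Real.exp_neg, inv_mul_le_iff₀ (Real.exp_pos _)] at hrab
  refine (pow_le_pow_iff_left₀ (norm_nonneg _) (by positivity) two_ne_zero).1 ?_
  calc ‖u b‖ ^ 2 ≤ Real.exp (2 * lam * (b - a)) * ‖u a‖ ^ 2 := hrab
    _ = (Real.exp (lam * (b - a)) * ‖u a‖) ^ 2 := by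
      rw [mul_pow, ← Real.exp_nat_mul]; ring_nf

theorem monotoneOn_mul_sub_mul_exp {s n : ℝ → ℝ} (c k : ℝ)
    (hs : ∀ t ∈ Icc a b, HasDerivWithinAt s (n t) (Icc a b) t)
    (h : ∀ t ∈ Ioo a b, 0 ≤ lam * (n t - k * Real.exp (lam * (t - c)))) :
    MonotoneOn (fun t => lam * s t - k * Real.exp (lam * (t - c))) (Icc a b) := by
  have hexp : ∀ t, HasDerivAt (fun t => Real.exp (lam * (t - c)))
      (Real.exp (lam * (t - c)) * lam) t := fun t => by
    simpa using (((hasDerivAt_id t).sub_const c).const_mul lam).exp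
  exact monotoneOn_Icc_of_hasDerivWithinAt_nonneg
    (fun t ht => ((hs t ht).const_mul lam).sub ((hexp t).hasDerivWithinAt.const_mul k))
    fun t ht => by linarith [h t ht]

theorem mul_exp_le_of_le_exp_mul {x y u v : ℝ} (h : x ≤ Real.exp (lam * (v - u)) * y) :
    x * Real.exp (lam * (u - v)) ≤ y := by
  rwa [mul_comm, show lam * (u - v) = -(lam * (v - u)) by ring, Real.exp_neg,
    inv_mul_le_iff₀ (Real.exp_pos _)]

theorem antitoneOn_sub_mul_of_le_exp_mul {s n : ℝ → ℝ}
    (hs : ∀ t ∈ Icc a b, HasDerivWithinAt s (n t) (Icc a b) t)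
    (hn : ∀ u ∈ Icc a b, ∀ v ∈ Icc a b, u ≤ v → n v ≤ Real.exp (lam * (v - u)) * n u) :
    AntitoneOn (fun t => n t - lam * s t) (Icc a b) := by
  intro u hu v hv huv
  have hsub : Icc u v ⊆ Icc a b := Icc_subset_Icc hu.1 hv.2
  have hsuv : ∀ t ∈ Icc u v, HasDerivWithinAt s (n t) (Icc u v) t := fun t ht =>
    (hs t (hsub ht)).mono hsub
  have hmem : ∀ t ∈ Ioo u v, t ∈ Icc a b := fun t ht => hsub (Ioo_subset_Icc_self ht)
  rcases le_total 0 lam with hlam | hlam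
  · have hcmp := monotoneOn_mul_sub_mul_exp v (n v) hsuv (fun t ht =>
      mul_nonneg hlam (sub_nonneg.2 (mul_exp_le_of_le_exp_mul (hn t (hmem t ht) v hv ht.2.le))))
      (left_mem_Icc.2 huv) (right_mem_Icc.2 huv) huv
    have hnv := mul_exp_le_of_le_exp_mul (hn u hu v hv huv)
    simp only [sub_self, mul_zero, Real.exp_zero, mul_one] at hcmp
    linarith
  · have hcmp := monotoneOn_mul_sub_mul_exp u (n u) hsuv (fun t ht =>
      mul_nonneg_of_nonpos_of_nonpos hlam (sub_nonpos.2 (by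
        simpa [mul_comm] using hn u hu t (hmem t ht) ht.1.le)))
      (left_mem_Icc.2 huv) (right_mem_Icc.2 huv) huv
    have hnv := hn u hu v hv huv
    simp only [sub_self, mul_zero, Real.exp_zero, mul_one] at hcmp
    linarith

theorem div_le_of_hasDerivWithinAt_mul_antitoneOn {H s n m : ℝ → ℝ} {t₀ t₁ t₂ : ℝ}
    (h01 : t₀ < t₁) (h12 : t₁ < t₂)
    (hH : ∀ t ∈ Icc t₀ t₂, HasDerivWithinAt H (n t * m t) (Icc t₀ t₂) t)
    (hs : ∀ t ∈ Icc t₀ t₂, HasDerivWithinAt s (n t) (Icc t₀ t₂) t)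
    (hn : ∀ t ∈ Ioo t₀ t₂, 0 < n t) (hm : AntitoneOn m (Icc t₀ t₂)) :
    ((s t₂ - s t₁) * H t₀ + (s t₁ - s t₀) * H t₂) / (s t₂ - s t₀) ≤ H t₁ := by
  have ht₁ : t₁ ∈ Icc t₀ t₂ := ⟨h01.le, h12.le⟩
  -- `G` is `H` minus its supporting line at `t₁`, measured in the parameter `s`
  set G : ℝ → ℝ := fun t => H t - m t₁ * s t
  have hG {I : Set ℝ} (hI : I ⊆ Icc t₀ t₂) :
      ∀ t ∈ I, HasDerivWithinAt G (n t * (m t - m t₁)) I t := fun t ht =>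
    (((hH t (hI ht)).sub ((hs t (hI ht)).const_mul (m t₁))).mono hI).congr_deriv (by ring)
  have hG01 : G t₀ ≤ G t₁ :=
    monotoneOn_Icc_of_hasDerivWithinAt_nonneg (hG (Icc_subset_Icc_right h12.le))
      (fun t ht => mul_nonneg (hn t ⟨ht.1, ht.2.trans h12⟩).le
        (sub_nonneg.2 <| hm ⟨ht.1.le, (ht.2.trans h12).le⟩ ht₁ ht.2.le))
      (left_mem_Icc.2 h01.le) (right_mem_Icc.2 h01.le) h01.le
  have hG12 : G t₂ ≤ G t₁ :=
    antitoneOn_Icc_of_hasDerivWithinAt_nonpos (hG (Icc_subset_Icc_left h01.le))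
      (fun t ht => mul_nonpos_of_nonneg_of_nonpos (hn t ⟨h01.trans ht.1, ht.2⟩).le
        (sub_nonpos.2 <| hm ht₁ ⟨(h01.trans ht.1).le, ht.2.le⟩ ht.1.le))
      (left_mem_Icc.2 h12.le) (right_mem_Icc.2 h12.le) h12.le
  have hsmono : StrictMonoOn s (Icc t₀ t₂) := by
    refine strictMonoOn_of_hasDerivWithinAt_pos (convex_Icc t₀ t₂) (f' := n)
      (HasDerivWithinAt.continuousOn hs) ?_ ?_ <;> rw [interior_Icc]
    · exact fun t ht => (hs t (Ioo_subset_Icc_self ht)).mono Ioo_subset_Icc_self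
    · exact hn
  have hs01 : s t₀ < s t₁ := hsmono (left_mem_Icc.2 (h01.trans h12).le) ht₁ h01
  have hs12 : s t₁ < s t₂ := hsmono ht₁ (right_mem_Icc.2 (h01.trans h12).le) h12
  simp only [G] at hG01 hG12
  rw [div_le_iff₀ (by linarith)]
  nlinarith

end RealVariable

theorem ContinuousOn.hasDerivWithinAt_intervalIntegral {F : Type*} [NormedAddCommGroup F]
    [NormedSpace ℝ F] [CompleteSpace F] {f : ℝ → F} {a b c t : ℝ} (hf : ContinuousOn f (Icc c b))
    (hca : c ≤ a) (ht : t ∈ Icc a b) :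
    HasDerivWithinAt (fun u => ∫ x in c..u, f x) (f t) (Icc a b) t := by
  have := Fact.mk ht
  have hfab : ContinuousOn f (Icc a b) := hf.mono (Icc_subset_Icc_left hca)
  refine intervalIntegral.integral_hasDerivWithinAt_right ?_
    (hfab.stronglyMeasurableAtFilter_nhdsWithin measurableSet_Icc t) (hfab.continuousWithinAt ht)
  exact (hf.mono (Icc_subset_Icc_right ht.2)).intervalIntegrable_of_Icc (hca.trans ht.1)

theorem HasDerivWithinAt.tendsto_slope_zero_right {F : Type*} [NormedAddCommGroup F]
    [NormedSpace ℝ F] {f : ℝ → F} {f' : F} {s : Set ℝ} {x : ℝ} (h : HasDerivWithinAt f f' s x)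
    (hs : s ∈ 𝓝[≥] x) : Tendsto (fun t => t⁻¹ • (f (x + t) - f x)) (𝓝[>] 0) (𝓝 f') := by
  have hslope : Tendsto (slope f x) (𝓝[>] x) (𝓝 f') :=
    (hasDerivWithinAt_iff_tendsto_slope' (lt_irrefl x)).1 (h.mono_of_mem_nhdsWithin hs).Ioi_of_Ici
  have hshift : Tendsto (x + ·) (𝓝[>] (0 : ℝ)) (𝓝[>] x) := by
    have := (map_add_left_nhdsGT (c := x) (a := (0 : ℝ))).le
    rwa [add_zero] at this
  simpa [Function.comp_def, slope_def_module] using hslope.comp hshift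

section GradientFlow

variable {E : Type*} [NormedAddCommGroup E] [InnerProductSpace ℝ E] {g : E → E} {lam T : ℝ}
  {α : ℝ → E}

theorem norm_sub_le_exp_mul_norm_sub (hg : ∀ x y, ⟪g y - g x, y - x⟫ ≤ lam * ‖y - x‖ ^ 2)
    (hα : ∀ t ∈ Ico 0 T, HasDerivWithinAt α (g (α t)) (Ico 0 T) t) {a b h : ℝ} (ha : 0 ≤ a)
    (hab : a ≤ b) (hh : 0 ≤ h) (hbT : b + h < T) :
    ‖α (b + h) - α b‖ ≤ Real.exp (lam * (b - a)) * ‖α (a + h) - α a‖ := by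
  have hI : Icc a b ⊆ Ico 0 T := fun t ht => ⟨ha.trans ht.1, by linarith [ht.2]⟩
  have hshift : MapsTo (· + h) (Icc a b) (Ico 0 T) := fun t ht =>
    ⟨by linarith [ha.trans ht.1], by linarith [ht.2]⟩
  refine norm_le_exp_mul_norm_of_inner_le (u := fun t => α (t + h) - α t)
    (u' := fun t => g (α (t + h)) - g (α t)) hab (fun t ht => ?_) fun t _ => ?_
  · have hαh : HasDerivWithinAt (fun t => α (t + h)) (g (α (t + h))) (Icc a b) t := by
      simpa [Function.comp_def] using
        (hα (t + h) (hshift ht)).scomp t ((hasDerivWithinAt_id t _).add_const h) hshift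
    exact hαh.sub ((hα t (hI ht)).mono hI)
  · rw [real_inner_comm]
    exact hg (α t) (α (t + h))

theorem norm_le_exp_mul_norm (hg : ∀ x y, ⟪g y - g x, y - x⟫ ≤ lam * ‖y - x‖ ^ 2)
    (hα : ∀ t ∈ Ico 0 T, HasDerivWithinAt α (g (α t)) (Ico 0 T) t) {a b : ℝ} (ha : 0 ≤ a)
    (hab : a ≤ b) (hbT : b < T) :
    ‖g (α b)‖ ≤ Real.exp (lam * (b - a)) * ‖g (α a)‖ := by
  have hlim : ∀ t ∈ Ico 0 T,
      Tendsto (fun h => ‖h⁻¹ • (α (t + h) - α t)‖) (𝓝[>] 0) (𝓝 ‖g (α t)‖) := fun t ht =>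
    ((hα t ht).tendsto_slope_zero_right
      (mem_of_superset (Ico_mem_nhdsGE ht.2) (Ico_subset_Ico_left ht.1))).norm
  refine le_of_tendsto_of_tendsto (hlim b ⟨ha.trans hab, hbT⟩)
    ((hlim a ⟨ha, hab.trans_lt hbT⟩).const_mul _) ?_
  filter_upwards [Ioo_mem_nhdsGT (sub_pos.2 hbT)] with h hh
  rw [norm_smul, norm_smul, mul_left_comm]
  gcongr
  exact norm_sub_le_exp_mul_norm_sub hg hα ha hab hh.1.le (by linarith [hh.2])

end GradientFlow

/-- λ-concavity of `f` along the arclength reparametrization of an `f`-gradient curve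
(linear model of Lemma 2.2). -/
theorem concave_along_arclength_reparam
    {E : Type*} [NormedAddCommGroup E] [InnerProductSpace ℝ E]
    (lam : ℝ) (f : E → ℝ) (g : E → E)
    (hconc : ConcaveOn ℝ Set.univ (fun x => f x - lam / 2 * ‖x‖ ^ 2))
    (hg : ∀ x, HasFDerivAt f (innerSL ℝ (g x)) x) (hgc : Continuous g)
    (T : ℝ) (α : ℝ → E)
    (hα : ∀ t ∈ Set.Ico (0 : ℝ) T, HasDerivWithinAt α (g (α t)) (Set.Ico 0 T) t)
    (hne : ∀ t ∈ Set.Ico (0 : ℝ) T, g (α t) ≠ 0)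
    (s : ℝ → ℝ) (hs : ∀ t, s t = ∫ u in (0 : ℝ)..t, ‖g (α u)‖) :
    ∀ t₀ t₁ t₂ : ℝ, 0 ≤ t₀ → t₀ < t₁ → t₁ < t₂ → t₂ < T →
      f (α t₁) - lam / 2 * (s t₁) ^ 2 ≥
        ((s t₂ - s t₁) * (f (α t₀) - lam / 2 * (s t₀) ^ 2)
          + (s t₁ - s t₀) * (f (α t₂) - lam / 2 * (s t₂) ^ 2)) / (s t₂ - s t₀) := by
  intro t₀ t₁ t₂ h0 h01 h12 h2T
  have hI : Icc 0 t₂ ⊆ Ico 0 T := Icc_subset_Ico_right h2T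
  have hI₀ : Icc t₀ t₂ ⊆ Ico 0 T := (Icc_subset_Icc_left h0).trans hI
  have hs' : ∀ t ∈ Icc t₀ t₂, HasDerivWithinAt s ‖g (α t)‖ (Icc t₀ t₂) t := by
    have hαc : ContinuousOn α (Icc 0 t₂) := fun t ht => (hα t (hI ht)).continuousWithinAt.mono hI
    rw [funext hs]
    exact fun t => (hgc.comp_continuousOn hαc).norm.hasDerivWithinAt_intervalIntegral h0
  have hH' : ∀ t ∈ Icc t₀ t₂, HasDerivWithinAt (fun t => f (α t) - lam / 2 * s t ^ 2)
      (‖g (α t)‖ * (‖g (α t)‖ - lam * s t)) (Icc t₀ t₂) t := fun t ht => by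
    refine (((hg (α t)).comp_hasDerivWithinAt t ((hα t (hI₀ ht)).mono hI₀)).sub
      (((hs' t ht).pow 2).const_mul (lam / 2))).congr_deriv ?_
    simp only [coe_innerSL_apply, real_inner_self_eq_norm_sq]
    ring
  have hlip : ∀ x y, ⟪g y - g x, y - x⟫ ≤ lam * ‖y - x‖ ^ 2 := fun x y =>
    inner_sub_sub_le_of_concaveOn_sub_sq hconc trivial trivial (hg x) (hg y)
  have hm : AntitoneOn (fun t => ‖g (α t)‖ - lam * s t) (Icc t₀ t₂) :=
    antitoneOn_sub_mul_of_le_exp_mul hs' fun u hu v hv huv =>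
      norm_le_exp_mul_norm hlip hα (h0.trans hu.1) huv (hv.2.trans_lt h2T)
  exact div_le_of_hasDerivWithinAt_mul_antitoneOn h01 h12 hH' hs'
    (fun t ht => norm_pos_iff.2 (hne t (hI₀ (Ioo_subset_Icc_self ht)))) hm
end

section
/- Let E be a real inner product space, λ ∈ ℝ, and f : E → ℝ a λ-concave Fréchet differentiable function. Let α, β : [0, ∞) → E be two f-gradient curves. Then for all t ≥ 0, ‖α(t) − β(t)‖ ≤ e^{λ·t}·‖α(0) − β(0)‖. -/
/-!
Write `φ = f - (λ/2)‖·‖²`, a concave function with gradient `g - λ • id`. Restricting `φ` to the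
line through two points shows that its gradient is monotone decreasing, i.e.
`⟪g x - g y, x - y⟫ ≤ λ ‖x - y‖²`. Hence the squared distance `‖α t - β t‖²` of two gradient
curves has derivative `2 ⟪g (α t) - g (β t), α t - β t⟫ ≤ 2λ ‖α t - β t‖²`, and Grönwall's
inequality gives `‖α t - β t‖² ≤ e^{2λt} ‖α 0 - β 0‖²`.
-/

open Set Real
open scoped RealInnerProductSpace

theorem ConcaveOn.hasFDerivAt_apply_sub_le {E : Type*} [NormedAddCommGroup E] [NormedSpace ℝ E]
    {s : Set E} {φ : E → ℝ} (hφ : ConcaveOn ℝ s φ) {x y : E} (hx : x ∈ s) (hy : y ∈ s)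
    {φx φy : E →L[ℝ] ℝ} (hφx : HasFDerivAt φ φx x) (hφy : HasFDerivAt φ φy y) :
    φx (x - y) ≤ φy (x - y) := by
  let L : ℝ →ᵃ[ℝ] E := AffineMap.lineMap y x
  have hL : ∀ t, HasDerivAt L (x - y) t := fun _ => AffineMap.hasDerivAt_lineMap
  have hconc : ConcaveOn ℝ (L ⁻¹' s) (φ ∘ L) := hφ.comp_affineMap L
  have h0 : (0 : ℝ) ∈ L ⁻¹' s := by simpa [L] using hy
  have h1 : (1 : ℝ) ∈ L ⁻¹' s := by simpa [L] using hx
  have hd0 : HasDerivAt (φ ∘ L) (φy (x - y)) 0 := by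
    simpa [L] using (show HasFDerivAt φ φy (L 0) by simpa [L] using hφy).comp_hasDerivAt 0 (hL 0)
  have hd1 : HasDerivAt (φ ∘ L) (φx (x - y)) 1 := by
    simpa [L] using (show HasFDerivAt φ φx (L 1) by simpa [L] using hφx).comp_hasDerivAt 1 (hL 1)
  exact (hconc.le_slope_of_hasDerivAt h0 h1 one_pos hd1).trans
    (hconc.slope_le_of_hasDerivAt h0 h1 one_pos hd0)

theorem inner_sub_le_of_concaveOn_sub_sq_norm {E : Type*} [NormedAddCommGroup E]
    [InnerProductSpace ℝ E] {lam : ℝ} {s : Set E} {f : E → ℝ} {g : E → E}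
    (hconc : ConcaveOn ℝ s (fun x => f x - lam / 2 * ‖x‖ ^ 2))
    (hg : ∀ x ∈ s, HasFDerivAt f (innerSL ℝ (g x)) x) {x y : E} (hx : x ∈ s) (hy : y ∈ s) :
    ⟪g x - g y, x - y⟫ ≤ lam * ‖x - y‖ ^ 2 := by
  have hφ : ∀ z ∈ s, HasFDerivAt (fun x => f x - lam / 2 * ‖x‖ ^ 2)
      (innerSL ℝ (g z) - (lam / 2) • 2 • innerSL ℝ z) z := fun z hz =>
    (hg z hz).sub ((hasStrictFDerivAt_norm_sq z).hasFDerivAt.const_mul (lam / 2))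
  have key := hconc.hasFDerivAt_apply_sub_le hx hy (hφ x hx) (hφ y hy)
  simp only [sub_apply, smul_apply, innerSL_apply_apply,
    smul_eq_mul, nsmul_eq_mul] at key
  rw [inner_sub_left, ← real_inner_self_eq_norm_sq, inner_sub_left (x := x)]
  linarith

theorem le_mul_exp_of_hasDerivWithinAt_Ici_le {f f' : ℝ → ℝ} {K a : ℝ}
    (hf : ∀ t ∈ Ici a, HasDerivWithinAt f (f' t) (Ici a) t)
    (bound : ∀ t ∈ Ici a, f' t ≤ K * f t) {t : ℝ} (ht : a ≤ t) :
    f t ≤ f a * exp (K * (t - a)) := by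
  have hcont : ContinuousOn f (Icc a t) := fun s hs =>
    (hf s hs.1).continuousWithinAt.mono Icc_subset_Ici_self
  have hright : ∀ s ∈ Ico a t, HasDerivWithinAt f (f' s) (Ici s) s := fun s hs =>
    (hf s hs.1).mono (Ici_subset_Ici.2 hs.1)
  have := le_gronwallBound_of_liminf_deriv_right_le (K := K) (ε := 0) hcont
    (fun s hs _ hr => (hright s hs).liminf_right_slope_le hr) le_rfl
    (fun s hs => (bound s hs.1).trans_eq (add_zero _).symm) t ⟨ht, le_rfl⟩
  rwa [gronwallBound_ε0] at this

theorem norm_le_exp_mul_of_inner_deriv_le {E : Type*} [NormedAddCommGroup E]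
    [InnerProductSpace ℝ E] {w w' : ℝ → E} {lam a : ℝ}
    (hw : ∀ t ∈ Ici a, HasDerivWithinAt w (w' t) (Ici a) t)
    (bound : ∀ t ∈ Ici a, ⟪w t, w' t⟫ ≤ lam * ‖w t‖ ^ 2) {t : ℝ} (ht : a ≤ t) :
    ‖w t‖ ≤ exp (lam * (t - a)) * ‖w a‖ := by
  have hsq : ‖w t‖ ^ 2 ≤ ‖w a‖ ^ 2 * exp (2 * lam * (t - a)) :=
    le_mul_exp_of_hasDerivWithinAt_Ici_le (fun s hs => (hw s hs).norm_sq)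
      (fun s hs => by linarith [bound s hs]) ht
  have hexp : exp (2 * lam * (t - a)) = exp (lam * (t - a)) ^ 2 := by
    rw [← exp_nat_mul]; ring_nf
  rw [hexp, ← mul_pow, mul_comm] at hsq
  exact (pow_le_pow_iff_left₀ (norm_nonneg _) (by positivity) two_ne_zero).1 hsq

/-- Gradient curves of a λ-concave function diverge at most at rate `e^{λ t}`
(linear model of Lemma 2.4 (i)). -/
theorem gradient_curves_dist_est
    {E : Type*} [NormedAddCommGroup E] [InnerProductSpace ℝ E]
    (lam : ℝ) (f : E → ℝ) (g : E → E)
    (hconc : ConcaveOn ℝ Set.univ (fun x => f x - lam / 2 * ‖x‖ ^ 2))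
    (hg : ∀ x, HasFDerivAt f (innerSL ℝ (g x)) x)
    (α β : ℝ → E)
    (hα : ∀ t ∈ Set.Ici (0 : ℝ), HasDerivWithinAt α (g (α t)) (Set.Ici 0) t)
    (hβ : ∀ t ∈ Set.Ici (0 : ℝ), HasDerivWithinAt β (g (β t)) (Set.Ici 0) t) :
    ∀ t ≥ (0 : ℝ), ‖α t - β t‖ ≤ Real.exp (lam * t) * ‖α 0 - β 0‖ := by
  intro t ht
  have hmono : ∀ s ∈ Ici (0 : ℝ),
      ⟪α s - β s, g (α s) - g (β s)⟫ ≤ lam * ‖α s - β s‖ ^ 2 := fun s _ => by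
    rw [real_inner_comm]
    exact inner_sub_le_of_concaveOn_sub_sq_norm hconc (fun x _ => hg x) (mem_univ _) (mem_univ _)
  simpa using norm_le_exp_mul_of_inner_deriv_le (fun s hs => (hα s hs).sub (hβ s hs)) hmono ht
end

section
/- Let E be a real inner product space, λ ∈ ℝ, and f : E → ℝ a λ-concave continuously differentiable function. Let α : [0, ∞) → E be an f-gradient curve with α(0) = p, and let q ∈ E. Then for all t ≥ 0, ‖α(t) − q‖² ≤ ‖p − q‖² + (2·f(p) − 2·f(q) + λ·‖p − q‖²)·θ_λ(t) + ‖∇f(p)‖²·θ_λ(t)², where θ_λ(t) = t if λ = 0 and θ_λ(t) = (e^{λt} − 1)/λ if λ ≠ 0. -/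
/-!
λ-concavity gives the first-order bound `f y ≤ f x + ⟪∇f x, y - x⟫ + λ/2 ‖y - x‖²`, hence
`⟪x - y, ∇f x - ∇f y⟫ ≤ λ ‖x - y‖²`. By Grönwall, two gradient curves then separate at most
like `e^{λt}`; comparing `α` with its own time shifts bounds `‖∇f (α t)‖ ≤ e^{λt} ‖∇f p‖`, and
integrating `(f ∘ α)' = ‖∇f ∘ α‖²` gives `f (α t) ≤ f p + ‖∇f p‖² θ_{2λ}(t)`. With these,
`(‖α t - q‖²)' = 2 ⟪α t - q, ∇f (α t)⟫` shows that the difference `D` of the two sides of the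
estimate satisfies `D' ≤ λ D` and `D 0 = 0`, so `D ≤ 0` by Grönwall once more.
-/

open scoped RealInnerProductSpace

/-- The function `θ_λ` of Lemma 2.4. -/
noncomputable def thetaLam (lam t : ℝ) : ℝ :=
  if lam = 0 then t else (Real.exp (lam * t) - 1) / lam

open Set Real

@[simp]
theorem thetaLam_zero_right (lam : ℝ) : thetaLam lam 0 = 0 := by
  simp [thetaLam]

theorem mul_thetaLam (lam t : ℝ) : lam * thetaLam lam t = exp (lam * t) - 1 := by
  rcases eq_or_ne lam 0 with rfl | h
  · simp
  · simp only [thetaLam, h, if_false]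
    exact mul_div_cancel₀ _ h

theorem two_mul_thetaLam_two_mul (lam t : ℝ) :
    2 * thetaLam (2 * lam) t = thetaLam lam t * (exp (lam * t) + 1) := by
  rcases eq_or_ne lam 0 with rfl | h
  · simp only [thetaLam, mul_zero, ↓reduceIte, zero_mul, exp_zero]
    ring
  · have hexp : exp (2 * lam * t) = exp (lam * t) ^ 2 := by
      rw [← exp_nat_mul]; ring_nf
    simp only [thetaLam, h, mul_eq_zero, two_ne_zero, false_or, if_false, hexp]
    field_simp
    ring

theorem hasDerivAt_thetaLam (lam t : ℝ) : HasDerivAt (thetaLam lam) (exp (lam * t)) t := by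
  rcases eq_or_ne lam 0 with rfl | h
  · have hθ : thetaLam 0 = id := by ext s; simp [thetaLam]
    simpa [hθ] using hasDerivAt_id t
  · have hθ : thetaLam lam = fun s => (exp (lam * s) - 1) / lam := by
      ext s; simp [thetaLam, h]
    rw [hθ]
    refine ((((hasDerivAt_id' t).const_mul lam).exp.sub_const 1).div_const lam).congr_deriv ?_
    field_simp

theorem le_mul_exp_of_hasDerivWithinAt_le_mul {φ φ' : ℝ → ℝ} {K a : ℝ}
    (hφ : ∀ x ∈ Ici a, HasDerivWithinAt φ (φ' x) (Ici a) x)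
    (bound : ∀ x ∈ Ici a, φ' x ≤ K * φ x) :
    ∀ x ∈ Ici a, φ x ≤ φ a * exp (K * (x - a)) := by
  intro x hx
  have := le_gronwallBound_of_liminf_deriv_right_le (δ := φ a) (ε := 0) (b := x)
    (fun y hy => (hφ y hy.1).continuousWithinAt.mono Icc_subset_Ici_self)
    (fun y hy r hr => ((hφ y hy.1).mono (Ici_subset_Ici.2 hy.1)).liminf_right_slope_le hr)
    le_rfl (fun y hy => by simpa using bound y hy.1) x ⟨hx, le_rfl⟩
  rwa [gronwallBound_ε0] at this

theorem ConcaveOn.le_add_fderiv {E : Type*} [NormedAddCommGroup E] [NormedSpace ℝ E]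
    {s : Set E} {F : E → ℝ} {F' : E →L[ℝ] ℝ} {x y : E} (hF : ConcaveOn ℝ s F)
    (hx : x ∈ s) (hy : y ∈ s) (hF' : HasFDerivAt F F' x) : F y ≤ F x + F' (y - x) := by
  have hline : HasDerivAt (F ∘ AffineMap.lineMap (k := ℝ) x y) (F' (y - x)) 0 := by
    simpa using hF'.comp_hasDerivAt_of_eq (0 : ℝ) AffineMap.hasDerivAt_lineMap (by simp)
  have := (hF.comp_affineMap (AffineMap.lineMap (k := ℝ) x y)).slope_le_of_hasDerivAt
    (by simpa using hx) (by simpa using hy) zero_lt_one hline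
  simp only [slope_def_field, Function.comp_apply, AffineMap.lineMap_apply_zero,
    AffineMap.lineMap_apply_one, sub_zero, div_one] at this
  linarith

theorem norm_le_mul_norm_of_hasDerivWithinAt {F : Type*} [NormedAddCommGroup F]
    [NormedSpace ℝ F] {β γ : ℝ → F} {a b : F} {x C : ℝ}
    (hβ : HasDerivWithinAt β a (Ioi x) x) (hγ : HasDerivWithinAt γ b (Ioi x) x)
    (h : ∀ y > x, ‖β y - β x‖ ≤ C * ‖γ y - γ x‖) : ‖a‖ ≤ C * ‖b‖ := by
  have slope_tendsto {δ : ℝ → F} {d : F} (hδ : HasDerivWithinAt δ d (Ioi x) x) :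
      Filter.Tendsto (fun y => ‖slope δ x y‖) (nhdsWithin x (Ioi x)) (nhds ‖d‖) := by
    have := hasDerivWithinAt_iff_tendsto_slope.1 hδ
    rw [sdiff_singleton_eq_self self_notMem_Ioi] at this
    exact this.norm
  refine le_of_tendsto_of_tendsto (slope_tendsto hβ) ((slope_tendsto hγ).const_mul C) ?_
  filter_upwards [self_mem_nhdsWithin] with y (hy : x < y)
  simp only [slope, vsub_eq_sub, norm_smul, norm_inv, Real.norm_of_nonneg (sub_pos.2 hy).le]
  calc (y - x)⁻¹ * ‖β y - β x‖ ≤ (y - x)⁻¹ * (C * ‖γ y - γ x‖) :=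
        mul_le_mul_of_nonneg_left (h y hy) (inv_nonneg.2 (sub_pos.2 hy).le)
    _ = C * ((y - x)⁻¹ * ‖γ y - γ x‖) := by ring

section GradientCurve

variable {E : Type*} [NormedAddCommGroup E] [InnerProductSpace ℝ E] {lam : ℝ} {f : E → ℝ}
  {g : E → E}

theorem ConcaveOn.le_add_inner_add_norm_sq
    (hconc : ConcaveOn ℝ univ (fun x => f x - lam / 2 * ‖x‖ ^ 2)) {x : E}
    (hgx : HasFDerivAt f (innerSL ℝ (g x)) x) (y : E) :
    f y ≤ f x + ⟪g x, y - x⟫ + lam / 2 * ‖y - x‖ ^ 2 := by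
  have := hconc.le_add_fderiv (mem_univ x) (mem_univ y)
    (hgx.sub ((hasStrictFDerivAt_norm_sq x).hasFDerivAt.const_mul (lam / 2)))
  simp only [sub_apply, smul_apply, innerSL_apply_apply,
    smul_eq_mul, nsmul_eq_mul, Nat.cast_ofNat, inner_sub_right, real_inner_self_eq_norm_sq] at this
  rw [norm_sub_sq_real, inner_sub_right, real_inner_comm x y]
  linarith

theorem ConcaveOn.inner_sub_sub_le_mul_norm_sq
    (hconc : ConcaveOn ℝ univ (fun x => f x - lam / 2 * ‖x‖ ^ 2)) {x y : E}
    (hgx : HasFDerivAt f (innerSL ℝ (g x)) x) (hgy : HasFDerivAt f (innerSL ℝ (g y)) y) :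
    ⟪x - y, g x - g y⟫ ≤ lam * ‖x - y‖ ^ 2 := by
  have hxy := hconc.le_add_inner_add_norm_sq hgx y
  have hyx := hconc.le_add_inner_add_norm_sq hgy x
  rw [← neg_sub x y, inner_neg_right, norm_neg] at hxy
  rw [inner_sub_right, real_inner_comm, real_inner_comm (g y)]
  linarith

def IsGradientCurve (g : E → E) (α : ℝ → E) : Prop :=
  ∀ t ∈ Ici (0 : ℝ), HasDerivWithinAt α (g (α t)) (Ici 0) t

theorem IsGradientCurve.comp_add_const {α : ℝ → E} (hα : IsGradientCurve g α) {c : ℝ}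
    (hc : 0 ≤ c) : IsGradientCurve g (fun t => α (t + c)) := by
  intro t ht
  have hmaps : MapsTo (· + c) (Ici (0 : ℝ)) (Ici 0) := fun u hu => add_nonneg hu hc
  simpa [Function.comp_def] using
    (hα (t + c) (hmaps ht)).scomp t ((hasDerivWithinAt_id t _).add_const c) hmaps

theorem IsGradientCurve.norm_sub_le_exp_mul
    (hconc : ConcaveOn ℝ univ (fun x => f x - lam / 2 * ‖x‖ ^ 2))
    (hg : ∀ x, HasFDerivAt f (innerSL ℝ (g x)) x) {α β : ℝ → E} (hα : IsGradientCurve g α)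
    (hβ : IsGradientCurve g β) {t : ℝ} (ht : 0 ≤ t) :
    ‖α t - β t‖ ≤ exp (lam * t) * ‖α 0 - β 0‖ := by
  have hsq := le_mul_exp_of_hasDerivWithinAt_le_mul (φ := fun s => ‖α s - β s‖ ^ 2)
    (K := 2 * lam) (fun s hs => ((hα s hs).sub (hβ s hs)).norm_sq)
    (fun s _ => by
      simp only [Pi.sub_apply]
      linarith [hconc.inner_sub_sub_le_mul_norm_sq (hg (α s)) (hg (β s))]) t ht
  have hexp : exp (2 * lam * (t - 0)) = exp (lam * t) ^ 2 := by rw [← exp_nat_mul]; ring_nf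
  rw [hexp, ← mul_pow, mul_comm] at hsq
  exact (pow_le_pow_iff_left₀ (norm_nonneg _) (by positivity) two_ne_zero).1 hsq

theorem IsGradientCurve.norm_grad_le_exp_mul
    (hconc : ConcaveOn ℝ univ (fun x => f x - lam / 2 * ‖x‖ ^ 2))
    (hg : ∀ x, HasFDerivAt f (innerSL ℝ (g x)) x) {α : ℝ → E} (hα : IsGradientCurve g α)
    {t : ℝ} (ht : 0 ≤ t) : ‖g (α t)‖ ≤ exp (lam * t) * ‖g (α 0)‖ := by
  refine norm_le_mul_norm_of_hasDerivWithinAt (x := 0) (β := fun s => α (s + t)) (γ := α)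
    ?_ ((hα 0 self_mem_Ici).mono Ioi_subset_Ici_self) fun s hs => ?_
  · simpa using ((hα.comp_add_const ht) 0 self_mem_Ici).mono Ioi_subset_Ici_self
  · simpa [add_comm] using (hα.comp_add_const hs.le).norm_sub_le_exp_mul hconc hg hα ht

theorem IsGradientCurve.le_add_norm_grad_sq_mul_thetaLam
    (hconc : ConcaveOn ℝ univ (fun x => f x - lam / 2 * ‖x‖ ^ 2))
    (hg : ∀ x, HasFDerivAt f (innerSL ℝ (g x)) x) {α : ℝ → E} (hα : IsGradientCurve g α)
    {t : ℝ} (ht : 0 ≤ t) : f (α t) ≤ f (α 0) + ‖g (α 0)‖ ^ 2 * thetaLam (2 * lam) t := by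
  have hdecr := le_mul_exp_of_hasDerivWithinAt_le_mul
    (φ := fun s => f (α s) - ‖g (α 0)‖ ^ 2 * thetaLam (2 * lam) s) (K := 0)
    (fun s hs => ((hg (α s)).comp_hasDerivWithinAt s (hα s hs)).sub
      ((hasDerivAt_thetaLam (2 * lam) s).hasDerivWithinAt.const_mul _))
    (fun s hs => ?_) t ht
  · simpa using hdecr
  · have hexp : exp (2 * lam * s) = exp (lam * s) ^ 2 := by rw [← exp_nat_mul]; ring_nf
    have hsq := pow_le_pow_left₀ (norm_nonneg _) (hα.norm_grad_le_exp_mul hconc hg hs) 2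
    rw [innerSL_apply_apply, real_inner_self_eq_norm_sq, zero_mul, hexp]
    linarith [mul_pow (exp (lam * s)) ‖g (α 0)‖ 2]

end GradientCurve

theorem gradient_curve_dist_to_point_est_general
    {E : Type*} [NormedAddCommGroup E] [InnerProductSpace ℝ E]
    (lam : ℝ) (f : E → ℝ) (g : E → E)
    (hconc : ConcaveOn ℝ Set.univ (fun x => f x - lam / 2 * ‖x‖ ^ 2))
    (hg : ∀ x, HasFDerivAt f (innerSL ℝ (g x)) x)
    (α : ℝ → E)
    (hα : ∀ t ∈ Set.Ici (0 : ℝ), HasDerivWithinAt α (g (α t)) (Set.Ici 0) t)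
    (p : E) (hp : α 0 = p) (q : E) :
    ∀ t ≥ (0 : ℝ),
      ‖α t - q‖ ^ 2 ≤ ‖p - q‖ ^ 2
        + (2 * f p - 2 * f q + lam * ‖p - q‖ ^ 2) * thetaLam lam t
        + ‖g p‖ ^ 2 * (thetaLam lam t) ^ 2 := by
  intro t ht
  have hθ s : HasDerivWithinAt (thetaLam lam) (exp (lam * s)) (Ici 0) s :=
    (hasDerivAt_thetaLam lam s).hasDerivWithinAt
  have hdefect := le_mul_exp_of_hasDerivWithinAt_le_mul (K := lam)
    (fun s hs => ((hα s hs).sub_const q).norm_sq.sub <|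
      (((hθ s).const_mul (2 * f p - 2 * f q + lam * ‖p - q‖ ^ 2)).const_add (‖p - q‖ ^ 2)).add
        (((hθ s).pow 2).const_mul (‖g p‖ ^ 2)))
    (fun s hs => ?_) t ht
  · simpa [hp] using hdefect
  · have hgrad := hconc.le_add_inner_add_norm_sq (hg (α s)) q
    have hvalue := IsGradientCurve.le_add_norm_grad_sq_mul_thetaLam hconc hg hα hs
    rw [← neg_sub, inner_neg_right, norm_neg, real_inner_comm] at hgrad
    rw [hp] at hvalue
    simp only [Pi.sub_apply, Pi.add_apply, Pi.pow_apply, Nat.cast_ofNat]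
    linear_combination 2 * hgrad + 2 * hvalue + ‖g p‖ ^ 2 * two_mul_thetaLam_two_mul lam s
      + (2 * f p - 2 * f q + lam * ‖p - q‖ ^ 2 + ‖g p‖ ^ 2 * thetaLam lam s) * mul_thetaLam lam s

/-- Distance estimate from a fixed point to a gradient curve of a λ-concave function
(linear model of Lemma 2.4 (ii)). -/
theorem gradient_curve_dist_to_point_est
    {E : Type*} [NormedAddCommGroup E] [InnerProductSpace ℝ E]
    (lam : ℝ) (f : E → ℝ) (g : E → E)
    (hconc : ConcaveOn ℝ Set.univ (fun x => f x - lam / 2 * ‖x‖ ^ 2))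
    (hg : ∀ x, HasFDerivAt f (innerSL ℝ (g x)) x) (hgc : Continuous g)
    (α : ℝ → E)
    (hα : ∀ t ∈ Set.Ici (0 : ℝ), HasDerivWithinAt α (g (α t)) (Set.Ici 0) t)
    (p : E) (hp : α 0 = p) (q : E) :
    ∀ t ≥ (0 : ℝ),
      ‖α t - q‖ ^ 2 ≤ ‖p - q‖ ^ 2
        + (2 * f p - 2 * f q + lam * ‖p - q‖ ^ 2) * thetaLam lam t
        + ‖g p‖ ^ 2 * (thetaLam lam t) ^ 2 :=
  gradient_curve_dist_to_point_est_general lam f g hconc hg α hα p hp q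
end

section
/- Let E be a real inner product space, λ ∈ ℝ, ε > 0, and let f : E → ℝ be λ-concave. Suppose that for every y ∈ E the quantity f_ε(y) = inf_{x ∈ E} ( f(x) + ‖x − y‖²/ε ) is finite (i.e. the set {f(x) + ‖x − y‖²/ε : x ∈ E} is bounded below). Then f_ε : E → ℝ is λ-concave. -/
private lemma norm_sq_combo {E : Type*} [NormedAddCommGroup E] [InnerProductSpace ℝ E]
    (a b : ℝ) (hab : a + b = 1) (u v : E) :
    ‖a • u + b • v‖ ^ 2 = a * ‖u‖ ^ 2 + b * ‖v‖ ^ 2 - a * b * ‖u - v‖ ^ 2 := by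
  have hb : b = 1 - a := by linarith
  subst hb
  simp only [← real_inner_self_eq_norm_sq, inner_add_add_self, inner_sub_sub_self,
    real_inner_smul_left, real_inner_smul_right]
  ring

/-- The min-type Moreau envelope of a λ-concave function is λ-concave
(linear model, κ = 0, of Lemma 3.7). -/
theorem moreau_envelope_concave
    {E : Type*} [NormedAddCommGroup E] [InnerProductSpace ℝ E]
    (lam ε : ℝ) (hε : 0 < ε) (f : E → ℝ)
    (hconc : ConcaveOn ℝ Set.univ (fun x => f x - lam / 2 * ‖x‖ ^ 2))
    (hbdd : ∀ y : E, BddBelow (Set.range fun x => f x + ‖x - y‖ ^ 2 / ε)) :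
    ConcaveOn ℝ Set.univ
      (fun y => (⨅ x : E, (f x + ‖x - y‖ ^ 2 / ε)) - lam / 2 * ‖y‖ ^ 2) := by
  refine ⟨convex_univ, ?_⟩
  intro y₀ _ y₁ _ a b ha hb hab
  simp only [smul_eq_mul]
  set y : E := a • y₀ + b • y₁ with hy
  have key : ∀ x : E,
      a * ((⨅ x : E, (f x + ‖x - y₀‖ ^ 2 / ε)) - lam / 2 * ‖y₀‖ ^ 2)
        + b * ((⨅ x : E, (f x + ‖x - y₁‖ ^ 2 / ε)) - lam / 2 * ‖y₁‖ ^ 2)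
        + lam / 2 * ‖y‖ ^ 2 ≤ f x + ‖x - y‖ ^ 2 / ε := by
    intro x
    set x₀ : E := x + (y₀ - y) with hx₀
    set x₁ : E := x + (y₁ - y) with hx₁
    have hxc : a • x₀ + b • x₁ = x := by
      have h : a • (x + (y₀ - y)) + b • (x + (y₁ - y))
          = (a + b) • (x - y) + (a • y₀ + b • y₁) := by module
      rw [hx₀, hx₁, h, hab, one_smul, ← hy]
      abel
    -- near-optimality of x₀, x₁
    have h0 : (⨅ z : E, (f z + ‖z - y₀‖ ^ 2 / ε)) ≤ f x₀ + ‖x - y‖ ^ 2 / ε := by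
      have := ciInf_le (hbdd y₀) x₀
      have hd : x₀ - y₀ = x - y := by rw [hx₀]; abel
      rwa [hd] at this
    have h1 : (⨅ z : E, (f z + ‖z - y₁‖ ^ 2 / ε)) ≤ f x₁ + ‖x - y‖ ^ 2 / ε := by
      have := ciInf_le (hbdd y₁) x₁
      have hd : x₁ - y₁ = x - y := by rw [hx₁]; abel
      rwa [hd] at this
    -- concavity
    have hc := hconc.2 (Set.mem_univ x₀) (Set.mem_univ x₁) ha hb hab
    simp only [smul_eq_mul, hxc] at hc
    -- norm identities
    have nx : ‖x‖ ^ 2 = a * ‖x₀‖ ^ 2 + b * ‖x₁‖ ^ 2 - a * b * ‖y₀ - y₁‖ ^ 2 := by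
      have hd : x₀ - x₁ = y₀ - y₁ := by rw [hx₀, hx₁]; abel
      rw [← hxc, norm_sq_combo a b hab, hd]
    have ny : ‖y‖ ^ 2 = a * ‖y₀‖ ^ 2 + b * ‖y₁‖ ^ 2 - a * b * ‖y₀ - y₁‖ ^ 2 := by
      rw [hy, norm_sq_combo a b hab]
    have h0' := mul_le_mul_of_nonneg_left h0 ha
    have h1' := mul_le_mul_of_nonneg_left h1 hb
    rw [nx] at hc
    rw [ny]
    have hs : a * (‖x - y‖ ^ 2 / ε) + b * (‖x - y‖ ^ 2 / ε) = ‖x - y‖ ^ 2 / ε := by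
      rw [← add_mul, hab, one_mul]
    nlinarith [h0', h1', hc, hs]
  have := le_ciInf key
  linarith [this]
end

section
/- Let E be a real inner product space, λ ≥ 0, and let f : E → ℝ be a λ-concave function that is Fréchet differentiable at a point p. Let γ : [0, T] → E be a 1-Lipschitz curve with γ(0) = p and γ(T) = q ≠ p, possessing a right derivative γ⁺(0) at 0, and suppose the composition h = f ∘ γ is λ-concave on [0, T] (i.e. t ↦ h(t) − (λ/2)t² is concave) and has a left derivative h⁻(T) at T. Set ν = (q − p)/‖q − p‖ and assume ⟪∇f(p), ν⟫ ≥ 0. Then ⟪∇f(p), γ⁺(0)⟫ − ⟪∇f(p), ν⟫ ≤ h⁺(0) − h⁻(T) + λ·T, where h⁺(0) = ⟪∇f(p), γ⁺(0)⟫ is the right derivative of h at 0. -/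
/-!
Once `⟪∇f(p), ξ⟫` cancels, the claim is `h⁻(T) ≤ ⟪∇f(p), ν⟫ + λT`. The λ-concavity of `h` on
`[0, T]` bounds `h(T) - h(0)` from below by `T h⁻(T) - λT²/2`, and the λ-concavity of `f` bounds
`f(q) - f(p)` from above by `⟪∇f(p), q - p⟫ + λ‖q - p‖²/2 = ‖q - p‖ ⟪∇f(p), ν⟫ + λ‖q - p‖²/2`.
As `‖q - p‖ ≤ T` (γ is 1-Lipschitz) and `⟪∇f(p), ν⟫ ≥ 0`, comparing the two bounds gives the claim.
-/

open scoped RealInnerProductSpace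

open Set

theorem ConcaveOn.le_add_of_hasFDerivAt_s14 {E : Type*} [NormedAddCommGroup E] [NormedSpace ℝ E]
    {s : Set E} {F : E → ℝ} {F' : E →L[ℝ] ℝ} {p q : E} (hF : ConcaveOn ℝ s F)
    (hp : p ∈ s) (hq : q ∈ s) (hd : HasFDerivAt F F' p) :
    F q ≤ F p + F' (q - p) := by
  have hline : ConcaveOn ℝ (Icc (0 : ℝ) 1) (F ∘ AffineMap.lineMap p q) :=
    (hF.comp_affineMap _).subset (fun t ht => hF.1.lineMap_mem hp hq ht) (convex_Icc 0 1)
  have hderiv : HasDerivAt (F ∘ AffineMap.lineMap (k := ℝ) p q) (F' (q - p)) 0 := by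
    have hd' : HasFDerivAt F F' (AffineMap.lineMap p q (0 : ℝ)) := by simpa using hd
    exact hd'.comp_hasDerivAt 0 AffineMap.hasDerivAt_lineMap
  have := hline.slope_le_of_hasDerivAt (by simp) (by simp) zero_lt_one hderiv
  simp only [slope_def_field, Function.comp_apply, AffineMap.lineMap_apply_one,
    AffineMap.lineMap_apply_zero, sub_zero, div_one] at this
  linarith

theorem le_add_inner_add_of_concaveOn_sub_norm_sq_of_hasFDerivAt {E : Type*} [NormedAddCommGroup E]
    [InnerProductSpace ℝ E] {s : Set E} {f : E → ℝ} {lam : ℝ} {g p q : E}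
    (hf : ConcaveOn ℝ s (fun x => f x - lam / 2 * ‖x‖ ^ 2)) (hp : p ∈ s) (hq : q ∈ s)
    (hd : HasFDerivAt f (innerSL ℝ g) p) :
    f q ≤ f p + ⟪g, q - p⟫ + lam / 2 * ‖q - p‖ ^ 2 := by
  have htangent := hf.le_add_of_hasFDerivAt_s14 hp hq
    (hd.sub ((hasStrictFDerivAt_norm_sq p).hasFDerivAt.const_mul (lam / 2)))
  have hexpand : ‖q‖ ^ 2 = ‖p‖ ^ 2 + 2 * ⟪p, q - p⟫ + ‖q - p‖ ^ 2 := by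
    simpa using norm_add_sq_real p (q - p)
  simp only [sub_apply, coe_innerSL_apply, smul_apply,
    nsmul_eq_mul, Nat.cast_ofNat, smul_eq_mul, hexpand] at htangent
  linarith

theorem le_sub_of_concaveOn_sub_sq_of_hasDerivWithinAt {S : Set ℝ} {h : ℝ → ℝ} {lam L a b : ℝ}
    (hh : ConcaveOn ℝ S (fun t => h t - lam / 2 * t ^ 2)) (ha : a ∈ S) (hb : b ∈ S) (hab : a < b)
    (hL : HasDerivWithinAt h L S b) :
    (b - a) * L - lam / 2 * (b - a) ^ 2 ≤ h b - h a := by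
  have hderiv : HasDerivWithinAt (fun t => h t - lam / 2 * t ^ 2) (L - lam * b) S b := by
    refine (hL.sub ((hasDerivAt_pow 2 b).const_mul (lam / 2)).hasDerivWithinAt).congr_deriv ?_
    norm_num
    ring
  have hslope := hh.le_slope_of_hasDerivWithinAt ha hb hab hderiv
  rw [slope_def_field, le_div_iff₀ (sub_pos.2 hab)] at hslope
  nlinarith

theorem angle_d_lemma_general
    {E : Type*} [NormedAddCommGroup E] [InnerProductSpace ℝ E]
    (lam : ℝ) (hlam : 0 ≤ lam) (f : E → ℝ)
    (hconc : ConcaveOn ℝ Set.univ (fun x => f x - lam / 2 * ‖x‖ ^ 2))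
    (p : E) (gp : E) (hgp : HasFDerivAt f (innerSL ℝ gp) p)
    (T : ℝ) (hT : 0 < T) (γ : ℝ → E)
    (hlip : LipschitzOnWith 1 γ (Set.Icc 0 T))
    (h0 : γ 0 = p) (q : E) (hq : γ T = q)
    (ξ : E)
    (hhconc : ConcaveOn ℝ (Set.Icc 0 T) (fun t => f (γ t) - lam / 2 * t ^ 2))
    (L : ℝ) (hL : HasDerivWithinAt (fun t => f (γ t)) L (Set.Icc 0 T) T)
    (hnu : 0 ≤ ⟪gp, ‖q - p‖⁻¹ • (q - p)⟫) :
    ⟪gp, ξ⟫ - ⟪gp, ‖q - p‖⁻¹ • (q - p)⟫ ≤ ⟪gp, ξ⟫ - L + lam * T := by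
  set r := ‖q - p‖
  set J := ⟪gp, r⁻¹ • (q - p)⟫
  have hrT : r ≤ T := by
    have := hlip.dist_le_mul T (right_mem_Icc.2 hT.le) 0 (left_mem_Icc.2 hT.le)
    rwa [dist_eq_norm, hq, h0, NNReal.coe_one, one_mul, Real.dist_0_eq_abs, abs_of_pos hT] at this
  have hinner : ⟪gp, q - p⟫ = r * J := by
    simp only [J]
    rcases eq_or_ne (q - p) 0 with hqp | hqp
    · simp [hqp]
    · rw [real_inner_smul_right, mul_inv_cancel_left₀ (norm_ne_zero_iff.2 hqp)]
  have hupper : f q - f p ≤ r * J + lam / 2 * r ^ 2 := by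
    have := le_add_inner_add_of_concaveOn_sub_norm_sq_of_hasFDerivAt hconc (mem_univ p) (mem_univ q) hgp
    linarith
  have hlower : T * L - lam / 2 * T ^ 2 ≤ f q - f p := by
    simpa [h0, hq] using le_sub_of_concaveOn_sub_sq_of_hasDerivWithinAt hhconc (left_mem_Icc.2 hT.le)
      (right_mem_Icc.2 hT.le) hT hL
  have hLT : T * L ≤ T * (J + lam * T) := by
    nlinarith [mul_le_mul_of_nonneg_right hrT hnu, mul_le_mul_of_nonneg_left
      (pow_le_pow_left₀ (norm_nonneg _) hrT 2) hlam]
  linarith [le_of_mul_le_mul_left hLT hT]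

/-- Linear model of Lemma A.6 (lem:angle-d): for a 1-Lipschitz curve `γ` from `p` to `q`
along which a λ-concave function `f` is λ-concave, with `ν` the direction from `p` to `q`
and `⟪∇f(p), ν⟫ ≥ 0`, one has
`⟪∇f(p), γ⁺(0)⟫ − ⟪∇f(p), ν⟫ ≤ h⁺(0) − h⁻(T) + λT` where `h = f ∘ γ`. -/
theorem angle_d_lemma
    {E : Type*} [NormedAddCommGroup E] [InnerProductSpace ℝ E]
    (lam : ℝ) (hlam : 0 ≤ lam) (f : E → ℝ)
    (hconc : ConcaveOn ℝ Set.univ (fun x => f x - lam / 2 * ‖x‖ ^ 2))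
    (p : E) (gp : E) (hgp : HasFDerivAt f (innerSL ℝ gp) p)
    (T : ℝ) (hT : 0 < T) (γ : ℝ → E)
    (hlip : LipschitzOnWith 1 γ (Set.Icc 0 T))
    (h0 : γ 0 = p) (q : E) (hq : γ T = q) (hne : q ≠ p)
    (ξ : E) (hξ : HasDerivWithinAt γ ξ (Set.Icc 0 T) 0)
    (hhconc : ConcaveOn ℝ (Set.Icc 0 T) (fun t => f (γ t) - lam / 2 * t ^ 2))
    (L : ℝ) (hL : HasDerivWithinAt (fun t => f (γ t)) L (Set.Icc 0 T) T)
    (hnu : 0 ≤ ⟪gp, ‖q - p‖⁻¹ • (q - p)⟫) :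
    ⟪gp, ξ⟫ - ⟪gp, ‖q - p‖⁻¹ • (q - p)⟫ ≤ ⟪gp, ξ⟫ - L + lam * T :=
  angle_d_lemma_general lam hlam f hconc p gp hgp T hT γ hlip h0 q hq ξ hhconc L hL hnu
end

section
/- Let h, g : (0, ∞) → [0, ∞) be functions and suppose there is s₁ > 0 such that for all 0 < s ≤ s₁ one has h(s/3) ≤ g(s)² and s ≤ g(s), and suppose g(s) → 0 as s → 0⁺. Then for every ε > 0 there exists s > 0 such that h(s) < 10·g(s)² and g(s) ≤ ε. -/
/-!
Suppose `h s ≥ 10 g(s)²` at every small scale `s` where `g s ≤ ε`. Chaining this with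
`h (s/3) ≤ g(s)²` along the scales `m / 3ⁿ` shows that `g(m / 3ⁿ)²` decays at least like `10⁻ⁿ`,
while `g s ≥ s` only lets it decay like `9⁻ⁿ`; since `10 > 3²` these are incompatible.
-/

open Set
open scoped Topology

theorem pow_mul_le_of_forall_mul_succ_le {u : ℕ → ℝ} {r : ℝ} (hr : 0 ≤ r)
    (hu : ∀ n, r * u (n + 1) ≤ u n) (n : ℕ) : r ^ n * u n ≤ u 0 := by
  induction n with
  | zero => simp
  | succ n ih =>
    calc r ^ (n + 1) * u (n + 1) = r ^ n * (r * u (n + 1)) := by ring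
      _ ≤ r ^ n * u n := by gcongr; exact hu n
      _ ≤ u 0 := ih

theorem exists_lt_mul_sq_of_le_sq_of_le {h g : ℝ → ℝ} {a K m : ℝ} (ha : 1 ≤ a) (hK : a ^ 2 < K)
    (hm : 0 < m) (H : ∀ s, 0 < s → s ≤ m → h (s / a) ≤ g s ^ 2 ∧ s ≤ g s) :
    ∃ s ∈ Ioc 0 m, h s < K * g s ^ 2 := by
  by_contra! hbig
  have ha₀ : 0 < a := zero_lt_one.trans_le ha
  have hK₀ : 0 ≤ K := (pow_nonneg ha₀.le 2).trans hK.le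
  have hscale : ∀ n : ℕ, m / a ^ n ∈ Ioc 0 m := fun n =>
    ⟨by positivity, div_le_self hm.le (one_le_pow₀ ha)⟩
  set u : ℕ → ℝ := fun n => g (m / a ^ n) ^ 2
  have hdecay : ∀ n, K * u (n + 1) ≤ u n := fun n => by
    have hstep := (H _ (hscale n).1 (hscale n).2).1
    rw [div_div, ← pow_succ] at hstep
    exact (hbig _ (hscale (n + 1))).trans hstep
  have hgrowth : ∀ n : ℕ, m ^ 2 * (K / a ^ 2) ^ n ≤ g m ^ 2 := fun n =>
    calc m ^ 2 * (K / a ^ 2) ^ n = K ^ n * (m / a ^ n) ^ 2 := by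
          rw [div_pow, div_pow, ← pow_mul, ← pow_mul, mul_comm 2 n]
          field_simp
      _ ≤ K ^ n * u n := by
          gcongr
          exact pow_le_pow_left₀ (hscale n).1.le (H _ (hscale n).1 (hscale n).2).2 2
      _ ≤ u 0 := pow_mul_le_of_forall_mul_succ_le hK₀ hdecay n
      _ = g m ^ 2 := by simp [u]
  obtain ⟨n, hn⟩ := pow_unbounded_of_one_lt (g m ^ 2 / m ^ 2)
    ((one_lt_div (by positivity)).2 hK)
  rw [div_lt_iff₀' (by positivity)] at hn
  exact (hn.trans_le (hgrowth n)).false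

theorem chopping_exercise_general
    (h g : ℝ → ℝ)
    (s₁ : ℝ) (hs₁ : 0 < s₁)
    (H : ∀ s : ℝ, 0 < s → s ≤ s₁ → h (s / 3) ≤ (g s) ^ 2 ∧ s ≤ g s)
    (hlim : Filter.Tendsto g (𝓝[>] (0 : ℝ)) (𝓝 0)) :
    ∀ ε > (0 : ℝ), ∃ s > (0 : ℝ), h s < 10 * (g s) ^ 2 ∧ g s ≤ ε := by
  intro ε hε
  obtain ⟨δ, hδ, hgδ⟩ := mem_nhdsGT_iff_exists_Ioc_subset.1 (hlim.eventually (Iic_mem_nhds hε))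
  obtain ⟨s, ⟨hs₀, hsm⟩, hs⟩ := exists_lt_mul_sq_of_le_sq_of_le (a := 3) (K := 10) (by norm_num) (by norm_num)
    (lt_min hδ hs₁) fun s hs₀ hsm => H s hs₀ (hsm.trans (min_le_right _ _))
  exact ⟨s, hs₀, hs, hgδ ⟨hs₀, hsm.trans (min_le_left _ _)⟩⟩

/-- The Exercise in Appendix A: the real-analysis core of the chopping procedure. -/
theorem chopping_exercise
    (h g : ℝ → ℝ) (hh : ∀ s > (0 : ℝ), 0 ≤ h s) (hgnn : ∀ s > (0 : ℝ), 0 ≤ g s)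
    (s₁ : ℝ) (hs₁ : 0 < s₁)
    (H : ∀ s : ℝ, 0 < s → s ≤ s₁ → h (s / 3) ≤ (g s) ^ 2 ∧ s ≤ g s)
    (hlim : Filter.Tendsto g (𝓝[>] (0 : ℝ)) (𝓝 0)) :
    ∀ ε > (0 : ℝ), ∃ s > (0 : ℝ), h s < 10 * (g s) ^ 2 ∧ g s ≤ ε :=
  chopping_exercise_general h g s₁ hs₁ H hlim
end

section
/- Let λ ≥ 0, let a < b be real numbers, and let g : [a, ∞) → ℝ be a continuous function such that: (i) t ↦ (g(a + t) − g(a) − (λ/2)t²)/t is non-increasing on (0, b − a]; (ii) t ↦ (g(b + t) − g(b) − (λ/2)t²)/t is non-increasing on (0, ∞); (iii) the right derivative g⁺(b) of g at b exists and satisfies g⁺(b) ≤ (g(b) − g(a) − (λ/2)(b − a)²)/(b − a). Then t ↦ (g(a + t) − g(a) − (λ/2)t²)/t is non-increasing on all of (0, ∞). -/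
open Set Filter Topology

/-- Real-function content of Extension Lemma A.2 (joining monotonic curves): if the
difference quotient `t ↦ (g(a+t) − g(a) − (λ/2)t²)/t` is non-increasing on `(0, b−a]`,
the corresponding quotient based at `b` is non-increasing on `(0, ∞)`, and the right
derivative of `g` at `b` is at most `(g(b) − g(a) − (λ/2)(b−a)²)/(b−a)`, then the quotient
based at `a` is non-increasing on all of `(0, ∞)`. -/
theorem joint_monotonic
    (lam : ℝ) (hlam : 0 ≤ lam) (a b : ℝ) (hab : a < b)
    (g : ℝ → ℝ) (hcont : ContinuousOn g (Set.Ici a))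
    (h₁ : AntitoneOn (fun t => (g (a + t) - g a - lam / 2 * t ^ 2) / t) (Set.Ioc 0 (b - a)))
    (h₂ : AntitoneOn (fun t => (g (b + t) - g b - lam / 2 * t ^ 2) / t) (Set.Ioi 0))
    (d : ℝ) (hd : HasDerivWithinAt g d (Set.Ici b) b)
    (hdle : d ≤ (g b - g a - lam / 2 * (b - a) ^ 2) / (b - a)) :
    AntitoneOn (fun t => (g (a + t) - g a - lam / 2 * t ^ 2) / t) (Set.Ioi 0) := by
  have hc0 : (0:ℝ) < b - a := sub_pos.mpr hab
  set c := b - a with hc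
  set Q : ℝ → ℝ := fun t => (g (a + t) - g a - lam / 2 * t ^ 2) / t with hQdef
  set A := g b - g a - lam / 2 * c ^ 2 with hA
  set B : ℝ → ℝ := fun u => g (b + u) - g b - lam / 2 * u ^ 2 with hB
  -- Step 1: tendsto of the quotient at b
  have hmap : Tendsto (fun u : ℝ => b + u) (𝓝[>] (0:ℝ)) (𝓝[>] b) := by
    apply tendsto_nhdsWithin_of_tendsto_nhds_of_eventually_within
    · have : Tendsto (fun u : ℝ => b + u) (𝓝 (0:ℝ)) (𝓝 (b + 0)) :=
        tendsto_const_nhds.add tendsto_id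
      simpa using this.mono_left nhdsWithin_le_nhds
    · filter_upwards [self_mem_nhdsWithin] with u hu
      exact lt_add_of_pos_right b hu
  have hslope := hasDerivWithinAt_iff_tendsto_slope.mp hd
  rw [Set.Ici_sdiff_left] at hslope
  have h3 : Tendsto (fun u : ℝ => slope g b (b + u)) (𝓝[>] (0:ℝ)) (𝓝 d) :=
    hslope.comp hmap
  have h5 : Tendsto (fun u : ℝ => lam / 2 * u) (𝓝[>] (0:ℝ)) (𝓝 0) := by
    have : Tendsto (fun u : ℝ => lam / 2 * u) (𝓝 (0:ℝ)) (𝓝 (lam / 2 * 0)) :=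
      tendsto_const_nhds.mul tendsto_id
    simpa using this.mono_left nhdsWithin_le_nhds
  have htend : Tendsto (fun u => B u / u) (𝓝[>] (0:ℝ)) (𝓝 d) := by
    have h6 : Tendsto (fun u : ℝ => slope g b (b + u) - lam / 2 * u) (𝓝[>] (0:ℝ)) (𝓝 (d - 0)) :=
      h3.sub h5
    rw [sub_zero] at h6
    refine h6.congr' ?_
    filter_upwards [self_mem_nhdsWithin] with u hu
    have hu0 : u ≠ 0 := ne_of_gt hu
    simp only [hB, slope_def_field, add_sub_cancel_left]
    field_simp
  have hQble : ∀ u : ℝ, 0 < u → B u / u ≤ d := by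
    intro u hu
    refine ge_of_tendsto htend ?_
    filter_upwards [Ioo_mem_nhdsGT_of_mem (Set.left_mem_Ico.2 hu)] with e he
    have := h₂ (Set.mem_Ioi.2 he.1) (Set.mem_Ioi.2 hu) he.2.le
    simpa only [hB] using this
  have hBA : ∀ u : ℝ, 0 < u → B u * c ≤ A * u := by
    intro u hu
    have h1 : B u / u ≤ A / c := (hQble u hu).trans hdle
    rwa [div_le_div_iff₀ hu hc0] at h1
  -- formula for Q on [c, ∞)
  have hform : ∀ u : ℝ, 0 ≤ u → Q (c + u) = (B u + A - lam * c * u) / (c + u) := by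
    intro u hu
    simp only [hQdef, hB, hA]
    rw [show a + (c + u) = b + u by rw [hc]; ring]
    congr 1
    ring
  -- key: antitone on [c, ∞)
  have key : ∀ u₁ u₂ : ℝ, 0 ≤ u₁ → u₁ ≤ u₂ → Q (c + u₂) ≤ Q (c + u₁) := by
    intro u₁ u₂ hu₁ h12
    rcases eq_or_lt_of_le h12 with rfl | h12
    · exact le_refl _
    have hu₂ : 0 < u₂ := lt_of_le_of_lt hu₁ h12
    rw [hform u₁ hu₁, hform u₂ hu₂.le]
    have hs : (0:ℝ) < c + u₁ := by linarith
    have ht : (0:ℝ) < c + u₂ := by linarith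
    rw [div_le_div_iff₀ ht hs]
    have H3 : B u₂ * c ≤ A * u₂ := hBA u₂ hu₂
    rcases eq_or_lt_of_le hu₁ with rfl | h0
    · have hB0 : B 0 = 0 := by simp [hB]
      nlinarith [mul_nonneg (mul_nonneg (mul_nonneg hlam hc0.le) hc0.le) hu₂.le]
    · have H2 : B u₁ * c ≤ A * u₁ := hBA u₁ h0
      have F1 : B u₂ / u₂ ≤ B u₁ / u₁ := by
        simpa only [hB] using h₂ (Set.mem_Ioi.2 h0) (Set.mem_Ioi.2 hu₂) h12.le
      have H1 : B u₂ * u₁ ≤ B u₁ * u₂ := by rwa [div_le_div_iff₀ hu₂ h0] at F1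
      nlinarith [mul_nonneg (sub_nonneg.2 h12.le) (sub_nonneg.2 H2),
        mul_nonneg hc0.le (sub_nonneg.2 H1),
        mul_nonneg h0.le (sub_nonneg.2 H1),
        mul_nonneg (mul_nonneg (mul_nonneg hlam hc0.le) hc0.le)
          (mul_nonneg h0.le (sub_nonneg.2 h12.le)), h0, mul_pos hc0 h0]
  have key' : ∀ s t : ℝ, c ≤ s → s ≤ t → Q t ≤ Q s := by
    intro s t hcs hst
    have h := key (s - c) (t - c) (by linarith) (by linarith)
    have e1 : c + (s - c) = s := by ring
    have e2 : c + (t - c) = t := by ring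
    rwa [e1, e2] at h
  intro s hs t ht hst
  simp only [Set.mem_Ioi] at hs ht
  rcases le_or_gt t c with htc | htc
  · exact h₁ ⟨hs, hst.trans htc⟩ ⟨ht, htc⟩ hst
  rcases le_or_gt s c with hsc | hsc
  · have h1 : Q t ≤ Q c := key' c t le_rfl htc.le
    have h2 : Q c ≤ Q s := h₁ ⟨hs, hsc⟩ ⟨hc0, le_rfl⟩ hsc
    exact h1.trans h2
  · exact key' s t hsc.le hst
end
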